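/- Let T be a type, S a T-signature, and R a representation of S. Every morphism of representations f from the syntax representation Σ(S) to R is equal, componentwise, to the recursively defined morphism init (init (Var v) = η^R(v), init (Build_i x₁ … xₙ) = α_i^R(V)(init x₁, …, init xₙ)); that is, for all V, t and x ∈ STS V t, f_V(t)(x) = init(x). In particular there is at most one morphism of representations Σ(S) → R. -/
import Mathlib


set_option autoImplicit false

universe u

/-- A monad (Kleisli triple) on the category `[T,Set]` of `T`-indexed families of types. -/
structure FMonad (T : Type u) where
  obj : (T → Type u) → T → Type u
  eta : ∀ {V : T → Type u} (t : T), V t → obj V t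
  subst : ∀ {V W : T → Type u}, (∀ t, V t → obj W t) → ∀ t, obj V t → obj W t
  eta_subst : ∀ {V W : T → Type u} (f : ∀ t, V t → obj W t) (t : T) (v : V t),
    subst f t (eta t v) = f t v
  subst_eta : ∀ {V : T → Type u} (t : T) (x : obj V t),
    subst (fun t v => eta t v) t x = x
  subst_subst : ∀ {V W X : T → Type u} (f : ∀ t, V t → obj W t)
    (g : ∀ t, W t → obj X t) (t : T) (x : obj V t),
    subst g t (subst f t x) = subst (fun t v => subst g t (f t v)) t x

/-- A module over the monad `P` with codomain `[T,Set]`. -/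
structure FModF {T : Type u} (P : FMonad T) where
  obj : (T → Type u) → T → Type u
  subst : ∀ {V W : T → Type u}, (∀ t, V t → P.obj W t) → ∀ t, obj V t → obj W t
  subst_eta : ∀ {V : T → Type u} (t : T) (x : obj V t),
    subst (fun t v => P.eta t v) t x = x
  subst_subst : ∀ {V W X : T → Type u} (f : ∀ t, V t → P.obj W t)
    (g : ∀ t, W t → P.obj X t) (t : T) (x : obj V t),
    subst g t (subst f t x) = subst (fun t v => P.subst g t (f t v)) t x

/-- A module over the monad `P` with codomain `Set` (the category of types). -/
structure FModS {T : Type u} (P : FMonad T) where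
  obj : (T → Type u) → Type u
  subst : ∀ {V W : T → Type u}, (∀ t, V t → P.obj W t) → obj V → obj W
  subst_eta : ∀ {V : T → Type u} (x : obj V),
    subst (fun t v => P.eta t v) x = x
  subst_subst : ∀ {V W X : T → Type u} (f : ∀ t, V t → P.obj W t)
    (g : ∀ t, W t → P.obj X t) (x : obj V),
    subst g (subst f x) = subst (fun t v => P.subst g t (f t v)) x

/-- Morphism of `P`-modules with codomain `[T,Set]`. -/
structure FModFHom {T : Type u} {P : FMonad T} (M N : FModF P) where
  app : ∀ (V : T → Type u) (t : T), M.obj V t → N.obj V t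
  natural : ∀ {V W : T → Type u} (f : ∀ t, V t → P.obj W t) (t : T) (x : M.obj V t),
    app W t (M.subst f t x) = N.subst f t (app V t x)

/-- Morphism of `P`-modules with codomain `Set`. -/
structure FModSHom {T : Type u} {P : FMonad T} (M N : FModS P) where
  app : ∀ (V : T → Type u), M.obj V → N.obj V
  natural : ∀ {V W : T → Type u} (f : ∀ t, V t → P.obj W t) (x : M.obj V),
    app W (M.subst f x) = N.subst f (app V x)

/-- Morphism of monads on `[T,Set]`. -/
structure FMonadHom {T : Type u} (P Q : FMonad T) where
  app : ∀ (V : T → Type u) (t : T), P.obj V t → Q.obj V t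
  app_eta : ∀ {V : T → Type u} (t : T) (v : V t), app V t (P.eta t v) = Q.eta t v
  app_subst : ∀ {V W : T → Type u} (f : ∀ t, V t → P.obj W t) (t : T) (x : P.obj V t),
    app W t (P.subst f t x) = Q.subst (fun t v => app W t (f t v)) t (app V t x)

/-- `Fresh a V` is the family `V` enriched with one fresh element of index `a`,
i.e. `V^{*a}`. -/
inductive Fresh {T : Type u} (a : T) (V : T → Type u) : T → Type u where
  | old : ∀ {t : T}, V t → Fresh a V t
  | new : Fresh a V a

/-- The shifted map `f^a : V^{*a} → P (W^{*a})`. -/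
def fshift {T : Type u} (P : FMonad T) (a : T) {V W : T → Type u}
    (f : ∀ t, V t → P.obj W t) : ∀ t, Fresh a V t → P.obj (Fresh a W) t
  | _, .old v => P.subst (fun t w => P.eta t (Fresh.old w)) _ (f _ v)
  | _, .new => P.eta a Fresh.new

theorem fshift_eta {T : Type u} (P : FMonad T) (a : T) (V : T → Type u) :
    fshift P a (fun t (v : V t) => P.eta t v) = fun t v => P.eta t v := by
  funext t x
  cases x with
  | old v => simp [fshift, P.eta_subst]
  | new => rfl

theorem fshift_comp {T : Type u} (P : FMonad T) (a : T) {V W X : T → Type u}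
    (f : ∀ t, V t → P.obj W t) (g : ∀ t, W t → P.obj X t) (t : T) (x : Fresh a V t) :
    P.subst (fshift P a g) t (fshift P a f t x)
      = fshift P a (fun t v => P.subst g t (f t v)) t x := by
  cases x with
  | new => simp [fshift, P.eta_subst]
  | old v =>
    simp only [fshift]
    rw [P.subst_subst, P.subst_subst]
    have h : (fun (t : T) (w : W t) =>
        P.subst (fshift P a g) t (P.eta t (Fresh.old w)))
        = fun (t : T) (w : W t) =>
            P.subst (fun t w => P.eta t (Fresh.old w)) t (g t w) := by
      funext t w
      rw [P.eta_subst]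
      rfl
    rw [h]

/-- The derived module `M^a`. -/
def derMod {T : Type u} {P : FMonad T} (a : T) (M : FModF P) : FModF P where
  obj V := M.obj (Fresh a V)
  subst f := M.subst (fshift P a f)
  subst_eta := by
    intro V t x
    show M.subst (fshift P a fun t v => P.eta t v) t x = x
    rw [fshift_eta]
    exact M.subst_eta t x
  subst_subst := by
    intro V W X f g t x
    show M.subst (fshift P a g) t (M.subst (fshift P a f) t x)
      = M.subst (fshift P a fun t v => P.subst g t (f t v)) t x
    rw [M.subst_subst]
    have h : (fun (t : T) (y : Fresh a V t) =>
        P.subst (fshift P a g) t (fshift P a f t y))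
        = fshift P a (fun t v => P.subst g t (f t v)) := by
      funext t y
      exact fshift_comp P a f g t y
    rw [h]

/-- The fibre module `M_a`. -/
def fibMod {T : Type u} {P : FMonad T} (a : T) (M : FModF P) : FModS P where
  obj V := M.obj V a
  subst f x := M.subst f a x
  subst_eta x := M.subst_eta a x
  subst_subst f g x := M.subst_subst f g a x

/-- The pullback of a `Q`-module (codomain `[T,Set]`) along a monad morphism. -/
def pbModF {T : Type u} {P Q : FMonad T} (h : FMonadHom P Q) (M : FModF Q) :
    FModF P where
  obj := M.obj
  subst f := M.subst (fun t v => h.app _ t (f t v))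
  subst_eta := by
    intro V t x
    show M.subst (fun t v => h.app V t (P.eta t v)) t x = x
    have e : (fun (t : T) (v : V t) => h.app V t (P.eta t v))
        = fun t v => Q.eta t v := by
      funext t v; exact h.app_eta t v
    rw [e]
    exact M.subst_eta t x
  subst_subst := by
    intro V W X f g t x
    show M.subst (fun t v => h.app X t (g t v)) t
        (M.subst (fun t v => h.app W t (f t v)) t x)
      = M.subst (fun t v => h.app X t (P.subst g t (f t v))) t x
    rw [M.subst_subst]
    have e : (fun (t : T) (v : V t) =>
        Q.subst (fun t v => h.app X t (g t v)) t (h.app W t (f t v)))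
        = fun (t : T) (v : V t) => h.app X t (P.subst g t (f t v)) := by
      funext t v
      rw [h.app_subst]
    rw [e]

/-- The pullback of a `Q`-module (codomain `Set`) along a monad morphism. -/
def pbModS {T : Type u} {P Q : FMonad T} (h : FMonadHom P Q) (M : FModS Q) :
    FModS P where
  obj := M.obj
  subst f x := M.subst (fun t v => h.app _ t (f t v)) x
  subst_eta := by
    intro V x
    show M.subst (fun t v => h.app V t (P.eta t v)) x = x
    have e : (fun (t : T) (v : V t) => h.app V t (P.eta t v))
        = fun t v => Q.eta t v := by
      funext t v; exact h.app_eta t v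
    rw [e]
    exact M.subst_eta x
  subst_subst := by
    intro V W X f g x
    show M.subst (fun t v => h.app X t (g t v))
        (M.subst (fun t v => h.app W t (f t v)) x)
      = M.subst (fun t v => h.app X t (P.subst g t (f t v))) x
    rw [M.subst_subst]
    have e : (fun (t : T) (v : V t) =>
        Q.subst (fun t v => h.app X t (g t v)) t (h.app W t (f t v)))
        = fun (t : T) (v : V t) => h.app X t (P.subst g t (f t v)) := by
      funext t v
      rw [h.app_subst]
    rw [e]

/-- `pow l V` is `V` enriched with fresh variables of types according to the list `l`,
written `V ** l`. -/
def pow {T : Type u} (l : List T) (V : T → Type u) : T → Type u :=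
  match l with
  | [] => V
  | b :: bs => pow bs (Fresh b V)

/-- Multiple shifting `f^{s⃗}`. -/
def lshift {T : Type u} (P : FMonad T) :
    ∀ (l : List T) {V W : T → Type u},
      (∀ t, V t → P.obj W t) → ∀ t, pow l V t → P.obj (pow l W) t
  | [], _, _, f => f
  | b :: bs, _, _, f => lshift P bs (fshift P b f)

/-- The carrier of the product module `(M^{s⃗₁})_{t₁} × ⋯ × (M^{s⃗ₙ})_{tₙ}`
associated to the argument list of an arity: a heterogeneous list. -/
inductive Args {T : Type u} (M : (T → Type u) → T → Type u) (V : T → Type u) :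
    List (List T × T) → Type u where
  | nil : Args M V []
  | cons : ∀ {b : List T × T} {bs : List (List T × T)},
      M (pow b.1 V) b.2 → Args M V bs → Args M V (b :: bs)

/-- The module substitution of the product module associated to an argument list. -/
def argSubst {T : Type u} (P : FMonad T) {V W : T → Type u}
    (f : ∀ t, V t → P.obj W t) :
    ∀ {l : List (List T × T)}, Args P.obj V l → Args P.obj W l
  | _, .nil => .nil
  | _, .cons (b := b) x xs => .cons (P.subst (lshift P b.1 f) b.2 x) (argSubst P f xs)

/-- A `T`-signature: a family of `T`-arities, indexed by some type.
An arity is a pair of a list of pairs `(s⃗, t)` and an output type `t₀`. -/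
structure Signature (T : Type u) where
  idx : Type u
  ar : idx → List (List T × T) × T

/-- A representation of the signature `S`: a monad on `[T,Set]` together with,
for each arity of `S`, a module morphism from the associated product of derived
fibre modules to the fibre module over the output type. -/
structure Repres {T : Type u} (S : Signature T) where
  mon : FMonad T
  rep : ∀ (i : S.idx) (V : T → Type u),
    Args mon.obj V (S.ar i).1 → mon.obj V (S.ar i).2
  rep_hom : ∀ (i : S.idx) {V W : T → Type u} (f : ∀ t, V t → mon.obj W t)
      (x : Args mon.obj V (S.ar i).1),
    rep i W (argSubst mon f x) = mon.subst f (S.ar i).2 (rep i V x)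

/-- Componentwise application of a monad morphism to an argument list; this is
the product of the derived fibres of the module morphism induced by the monad
morphism. -/
def argApp {T : Type u} {P Q : FMonad T} (h : FMonadHom P Q) {V : T → Type u} :
    ∀ {l : List (List T × T)}, Args P.obj V l → Args Q.obj V l
  | _, .nil => .nil
  | _, .cons (b := b) x xs => .cons (h.app (pow b.1 V) b.2 x) (argApp h xs)

/-- A morphism of representations: a monad morphism commuting with the
representation module morphisms. -/
structure RepresHom {T : Type u} {S : Signature T} (P Q : Repres S) where
  mh : FMonadHom P.mon Q.mon
  commute : ∀ (i : S.idx) (V : T → Type u) (x : Args P.mon.obj V (S.ar i).1),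
    mh.app V (S.ar i).2 (P.rep i V x) = Q.rep i V (argApp mh x)

mutual
/-- The syntax associated to the signature `S`: an inductive family parametrized
by a family `V` of variables and indexed by object types. `Var` makes a variable
into a term; for each arity `i` of `S` with argument list `[(s⃗₁,t₁),…,(s⃗ₙ,tₙ)]`
and output type `t₀`, `Build i` takes arguments in `STS S (V ** s⃗ⱼ) tⱼ` and
produces a term of type `t₀`. -/
inductive STS {T : Type u} (S : Signature T) : (T → Type u) → T → Type (u + 1) where
  | Var : ∀ {V : T → Type u} {t : T}, V t → STS S V t
  | Build : ∀ {V : T → Type u} (i : S.idx),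
      STSList S V (S.ar i).1 → STS S V (S.ar i).2

inductive STSList {T : Type u} (S : Signature T) :
    (T → Type u) → List (List T × T) → Type (u + 1) where
  | nil : ∀ {V : T → Type u}, STSList S V []
  | cons : ∀ {V : T → Type u} {b : List T × T} {bs : List (List T × T)},
      STS S (pow b.1 V) b.2 → STSList S V bs → STSList S V (b :: bs)
end

/-- The shifting of a substitution map `f : V → STS S W`, relative to a
candidate substitution operation `sb`: the fresh variable is sent to itself as
a term (via `Var`), and an old variable `v` is sent to the renaming of `f v`
along the inclusion `W → W^{*a}` (renaming being substitution with a family of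
variables-as-terms). -/
def genShift {T : Type u} (S : Signature T)
    (sb : ∀ (V W : T → Type u), (∀ t, V t → STS S W t) → ∀ t, STS S V t → STS S W t)
    (a : T) {V W : T → Type u} (f : ∀ t, V t → STS S W t) :
    ∀ t, Fresh a V t → STS S (Fresh a W) t
  | _, .old v => sb W (Fresh a W) (fun _ w => STS.Var (Fresh.old w)) _ (f _ v)
  | _, .new => STS.Var Fresh.new

/-- Multiple shifting `f^{s⃗}`, relative to a candidate substitution operation. -/
def genLshift {T : Type u} (S : Signature T)
    (sb : ∀ (V W : T → Type u), (∀ t, V t → STS S W t) → ∀ t, STS S V t → STS S W t) :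
    ∀ (l : List T) {V W : T → Type u},
      (∀ t, V t → STS S W t) → ∀ t, pow l V t → STS S (pow l W) t
  | [], _, _, f => f
  | b :: bs, _, _, f => genLshift S sb bs (genShift S sb b f)

/-- Map a family of functions over the components of an argument list of terms. -/
def stsMap {T : Type u} {S : Signature T} {V W : T → Type u}
    (h : ∀ b : List T × T, STS S (pow b.1 V) b.2 → STS S (pow b.1 W) b.2) :
    ∀ {l : List (List T × T)}, STSList S V l → STSList S W l
  | _, .nil => .nil
  | _, .cons (b := b) x xs => .cons (h b x) (stsMap h xs)

/-- Map a family of functions `h : STS S V t → R V t` over the components of an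
argument list of terms, yielding an argument list for the monad `R`. -/
def stsToArgs {T : Type u} {S : Signature T} (R : FMonad T)
    (h : ∀ (V : T → Type u) (t : T), STS S V t → R.obj V t) {V : T → Type u} :
    ∀ {l : List (List T × T)}, STSList S V l → Args R.obj V l
  | _, .nil => .nil
  | _, .cons (b := b) x xs => .cons (h (pow b.1 V) b.2 x) (stsToArgs R h xs)

/-- Uniqueness of the initial morphism: every morphism of representations `f`
from the syntax representation `Σ(S)` to a representation `R` — i.e. every
family `f` compatible with the units, with substitution (for any substitution
operation on `STS S` satisfying its defining recursion equations) and with the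
representation structure — coincides componentwise with the recursively defined
morphism `init` (characterized by `init (Var v) = η^R v` and
`init (Build i x₁ … xₙ) = α_i^R (init x₁, …, init xₙ)`). In particular there is
at most one morphism of representations `Σ(S) → R`. -/
theorem initial_morphism_unique (T : Type u) (S : Signature T) (R : Repres S)
    -- `f` is a morphism of representations from `Σ(S)` to `R`:
    (f : ∀ (V : T → Type u) (t : T), STS S V t → R.mon.obj V t)
    -- ... a morphism of monads: compatible with the units ...
    (hf_eta : ∀ (V : T → Type u) (t : T) (v : V t),
      f V t (STS.Var v) = R.mon.eta t v)
    -- ... and with substitution ...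
    (hf_subst : ∀ sb : ∀ (V W : T → Type u),
        (∀ t, V t → STS S W t) → ∀ t, STS S V t → STS S W t,
      (∀ (V W : T → Type u) (g : ∀ t, V t → STS S W t) (t : T) (v : V t),
        sb V W g t (STS.Var v) = g t v) →
      (∀ (V W : T → Type u) (g : ∀ t, V t → STS S W t) (i : S.idx)
          (xs : STSList S V (S.ar i).1),
        sb V W g (S.ar i).2 (STS.Build i xs)
          = STS.Build i
              (stsMap (fun b x =>
                sb (pow b.1 V) (pow b.1 W) (genLshift S sb b.1 g) b.2 x) xs)) →
      ∀ (V W : T → Type u) (g : ∀ t, V t → STS S W t) (t : T) (x : STS S V t),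
        f W t (sb V W g t x)
          = R.mon.subst (fun t v => f W t (g t v)) t (f V t x))
    -- ... which commutes with the representation structures:
    (hf_rep : ∀ (V : T → Type u) (i : S.idx) (xs : STSList S V (S.ar i).1),
      f V (S.ar i).2 (STS.Build i xs) = R.rep i V (stsToArgs R.mon f xs))
    -- `init` is the recursively defined morphism:
    (init : ∀ (V : T → Type u) (t : T), STS S V t → R.mon.obj V t)
    (hinit_var : ∀ (V : T → Type u) (t : T) (v : V t),
      init V t (STS.Var v) = R.mon.eta t v)
    (hinit_build : ∀ (V : T → Type u) (i : S.idx) (xs : STSList S V (S.ar i).1),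
      init V (S.ar i).2 (STS.Build i xs) = R.rep i V (stsToArgs R.mon init xs)) :
    ∀ (V : T → Type u) (t : T) (x : STS S V t), f V t x = init V t x := by
  intro V t x
  induction x using STS.rec
    (motive_2 := fun V l xs => stsToArgs R.mon f xs = stsToArgs R.mon init xs) with
  | Var v => rw [hf_eta, hinit_var]
  | Build i xs ih => rw [hf_rep, hinit_build, ih]
  | nil => rfl
  | cons x xs ihx ihxs => simp only [stsToArgs, ihx, ihxs]
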